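/- Let 0 < ε < 1 and let f : ℝ → ℝ be twice continuously differentiable with f, f', f'' bounded. Then for every x ∈ ℝ, the principal value integral PV ∫_ℝ ∂ₓ[ (f(x) − f(x−α)) |α|^ε / α ] dα exists (as the limit δ → 0 of the integral over {δ ≤ |α| ≤ 1/δ}) and equals −(1−ε) · PV ∫_ℝ (f(x) − f(x−α)) / |α|^{2−ε} dα; in particular PV ∫_ℝ ∂ₓ Δ_α^ε f(x) dα = −(1−ε) Λ^{1−ε}f(x) (with normalizing constant 1). -/

import Mathlib

open MeasureTheory Filter Set Real Topology

noncomputable section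

/-- Truncated domain `{α : δ ≤ |α| ≤ 1/δ}` for principal value integrals. -/
def pvSet (δ : ℝ) : Set ℝ := {α : ℝ | δ ≤ |α| ∧ |α| ≤ δ⁻¹}

/-- The principal value integral of `g` over `ℝ` exists and has value `L`. -/
def HasPV (g : ℝ → ℝ) (L : ℝ) : Prop :=
  Tendsto (fun δ : ℝ => ∫ α in pvSet δ, g α) (nhdsWithin 0 (Set.Ioi 0)) (nhds L)

/-- The principal value integral of `g` (junk value if the limit does not exist). -/
def pv (g : ℝ → ℝ) : ℝ :=
  limUnder (nhdsWithin 0 (Set.Ioi 0)) (fun δ : ℝ => ∫ α in pvSet δ, g α)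

/-- Sup norm (as a supremum of absolute values). -/
def supN (f : ℝ → ℝ) : ℝ := ⨆ x : ℝ, |f x|

/-- Homogeneous Hölder seminorm of exponent `γ`. -/
def holderS (γ : ℝ) (g : ℝ → ℝ) : ℝ :=
  ⨆ p : ℝ × ℝ, if p.1 = p.2 then (0:ℝ) else |g p.1 - g p.2| / |p.1 - p.2| ^ γ

/-- The `C^{2,γ}` norm: `‖f‖_∞ + ‖f'‖_∞ + ‖f''‖_∞ + |f''|_{Ċ^γ}`. -/
def c2Norm (γ : ℝ) (f : ℝ → ℝ) : ℝ :=
  supN f + supN (deriv f) + supN (deriv (deriv f)) + holderS γ (deriv (deriv f))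

/-- Membership in `C^{2,γ}(ℝ)`: twice continuously differentiable, `f`, `f'`, `f''`
bounded and `f''` uniformly `γ`-Hölder continuous. -/
def MemC2 (γ : ℝ) (f : ℝ → ℝ) : Prop :=
  ContDiff ℝ 2 f ∧ (∃ C, ∀ x, |f x| ≤ C) ∧ (∃ C, ∀ x, |deriv f x| ≤ C) ∧
    (∃ C, ∀ x, |deriv (deriv f) x| ≤ C) ∧
    ∃ H, ∀ x y, |deriv (deriv f) x - deriv (deriv f) y| ≤ H * |x - y| ^ γ

/-- The `L²(ℝ)` norm. -/
def l2N (f : ℝ → ℝ) : ℝ := Real.sqrt (∫ x : ℝ, (f x) ^ 2)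

/-- Membership in `L²(ℝ)`. -/
def MemL2 (f : ℝ → ℝ) : Prop := MeasureTheory.MemLp f 2 MeasureTheory.volume

/-- The regularized difference quotient `Δ_α^ε f (x) = (f x - f (x - α)) |α|^ε / α`. -/
def regDiff (ε : ℝ) (f : ℝ → ℝ) (α x : ℝ) : ℝ := (f x - f (x - α)) * |α| ^ ε / α

/-- `f` solves the regularized system
`∂ₜ f - ε ∂ₓ² f = PV ∫ ∂ₓ arctan (Δ_α^ε f) dα` on the time interval `(0,T]`. -/
def IsRegSolution (ε : ℝ) (f : ℝ → ℝ → ℝ) (T : ℝ) : Prop :=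
  ∀ t ∈ Set.Ioc (0:ℝ) T, ∀ x : ℝ,
    DifferentiableAt ℝ (fun s => f s x) t ∧
    HasPV (fun α => regDiff ε (deriv (f t)) α x / (1 + (regDiff ε (f t) α x) ^ 2))
      (deriv (fun s => f s x) t - ε * deriv (deriv (f t)) x)

/-- `f` solves the 2D Muskat contour equation
`∂ₜ f = PV ∫ (∂ₓf(x) - ∂ₓf(x-α)) α / (α² + (f(x) - f(x-α))²) dα` for times in `s`. -/
def IsMuskatSolution (f : ℝ → ℝ → ℝ) (s : Set ℝ) : Prop :=
  ∀ t ∈ s, ∀ x : ℝ,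
    DifferentiableAt ℝ (fun τ => f τ x) t ∧
    HasPV (fun α => (deriv (f t) x - deriv (f t) (x - α)) * α /
        (α ^ 2 + (f t x - f t (x - α)) ^ 2))
      (deriv (fun τ => f τ x) t)

end

/-!
Both principal values are computed by pairing `α` with `-α`. With the second difference
`u α = 2 f x - f (x - α) - f (x + α)`, the kernel integrand pairs to `u α * α ^ (ε - 2)` and the
regularized difference quotients of `f'` pair to `-u' α * α ^ (ε - 1)`. Integrating by parts on
`[δ, δ⁻¹]` turns the latter into `-(1 - ε) * ∫ u α * α ^ (ε - 2)` plus the boundary terms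
`u δ * δ ^ (ε - 1)` and `u δ⁻¹ * δ ^ (1 - ε)`, which vanish because `|u α| ≤ ‖f''‖ α ^ 2` and
`|u α| ≤ 4 ‖f‖`. The same two bounds make `u α * α ^ (ε - 2)` integrable on `(0, ∞)`.
-/

theorem pvSet_eq_union_Icc {δ : ℝ} (hδ : 0 ≤ δ) : pvSet δ = Icc (-δ⁻¹) (-δ) ∪ Icc δ δ⁻¹ := by
  ext α
  rcases le_or_gt 0 α with hα | hα
  · simp only [pvSet, mem_ofPred_eq, mem_union, mem_Icc, abs_of_nonneg hα]
    constructor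
    · exact Or.inr
    · rintro (h | h) <;> constructor <;> linarith [h.1, h.2]
  · simp only [pvSet, mem_ofPred_eq, mem_union, mem_Icc, abs_of_neg hα]
    constructor
    · rintro ⟨h1, h2⟩; exact Or.inl ⟨by linarith, by linarith⟩
    · rintro (h | h) <;> constructor <;> linarith [h.1, h.2]

theorem setIntegral_pvSet_eq_intervalIntegral {h : ℝ → ℝ} (hh : ContinuousOn h {0}ᶜ) {δ : ℝ}
    (hδ₀ : 0 < δ) (hδ₁ : δ ≤ 1) :
    ∫ α in pvSet δ, h α = ∫ α in δ..δ⁻¹, (h α + h (-α)) := by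
  have hδδ : δ ≤ δ⁻¹ := hδ₁.trans (one_le_inv₀ hδ₀ |>.mpr hδ₁)
  have hpos : Icc δ δ⁻¹ ⊆ {0}ᶜ := fun t ht => (hδ₀.trans_le ht.1).ne'
  have hneg : Icc (-δ⁻¹) (-δ) ⊆ {0}ᶜ := fun t ht => (ht.2.trans_lt (neg_neg_of_pos hδ₀)).ne
  have hpos_int : IntervalIntegrable h volume δ δ⁻¹ :=
    (hh.mono (uIcc_of_le hδδ ▸ hpos)).intervalIntegrable
  have hneg_int : IntervalIntegrable (fun α => h (-α)) volume δ δ⁻¹ := by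
    refine (hh.comp continuous_neg.continuousOn fun t ht => ?_).intervalIntegrable
    rw [uIcc_of_le hδδ] at ht
    simpa using hpos ht
  have hdisj : Disjoint (Icc (-δ⁻¹) (-δ)) (Icc δ δ⁻¹) :=
    Set.disjoint_left.mpr fun a ha ha' => by linarith [ha.2, ha'.1]
  rw [pvSet_eq_union_Icc hδ₀.le, setIntegral_union hdisj measurableSet_Icc
      ((hh.mono hneg).integrableOn_compact isCompact_Icc)
      ((hh.mono hpos).integrableOn_compact isCompact_Icc),
    integral_Icc_eq_integral_Ioc, integral_Icc_eq_integral_Ioc,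
    ← intervalIntegral.integral_of_le (neg_le_neg hδδ), ← intervalIntegral.integral_of_le hδδ,
    intervalIntegral.integral_add hpos_int hneg_int, intervalIntegral.integral_comp_neg h, add_comm]

theorem hasPV_of_tendsto_intervalIntegral {h k : ℝ → ℝ} {L : ℝ} (hh : ContinuousOn h {0}ᶜ)
    (hk : ∀ α > 0, h α + h (-α) = k α)
    (hlim : Tendsto (fun δ => ∫ α in δ..δ⁻¹, k α) (𝓝[>] 0) (𝓝 L)) : HasPV h L := by
  refine hlim.congr' ?_
  filter_upwards [Ioc_mem_nhdsGT one_pos] with δ hδ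
  have hδδ : δ ≤ δ⁻¹ := hδ.2.trans (one_le_inv₀ hδ.1 |>.mpr hδ.2)
  rw [setIntegral_pvSet_eq_intervalIntegral hh hδ.1 hδ.2]
  refine intervalIntegral.integral_congr fun α hα => (hk α ?_).symm
  rw [uIcc_of_le hδδ] at hα
  exact hδ.1.trans_le hα.1

theorem tendsto_intervalIntegral_inv_nhdsGT_zero {ψ : ℝ → ℝ} (hψ : IntegrableOn ψ (Ioi 0)) :
    Tendsto (fun δ => ∫ α in δ..δ⁻¹, ψ α) (𝓝[>] 0) (𝓝 (∫ α in Ioi 0, ψ α)) := by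
  have hcover : AECover (volume.restrict (Ioi (0 : ℝ))) (𝓝[>] 0) fun δ => Ioi δ ∩ Iic δ⁻¹ :=
    (aecover_Ioi_of_Ioi (tendsto_id.mono_left nhdsWithin_le_nhds)).inter
      (aecover_Iic tendsto_inv_nhdsGT_zero).restrict
  refine (hcover.integral_tendsto_of_countably_generated hψ).congr' ?_
  filter_upwards [Ioc_mem_nhdsGT one_pos] with δ hδ
  have hδδ : δ ≤ δ⁻¹ := hδ.2.trans (one_le_inv₀ hδ.1 |>.mpr hδ.2)
  rw [Measure.restrict_restrict (measurableSet_Ioi.inter measurableSet_Iic),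
    (inter_eq_left (s := Ioi δ ∩ Iic δ⁻¹) (t := Ioi 0)).mpr fun t ht => hδ.1.trans ht.1,
    intervalIntegral.integral_of_le hδδ]
  rfl

section PowerWeight

variable {u : ℝ → ℝ} {A B ε : ℝ}

theorem integrableOn_Ioi_mul_rpow (hu : ContinuousOn u (Ioi 0))
    (hA : ∀ α > 0, |u α| ≤ A * α ^ 2) (hB : ∀ α > 0, |u α| ≤ B) (hε₀ : -1 < ε) (hε₁ : ε < 1) :
    IntegrableOn (fun α => u α * α ^ (ε - 2)) (Ioi 0) := by
  have hcont : ContinuousOn (fun α => u α * α ^ (ε - 2)) (Ioi 0) :=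
    hu.mul (continuousOn_id.rpow_const fun α hα => Or.inl (ne_of_gt hα))
  have hnorm : ∀ α > 0, ‖u α * α ^ (ε - 2)‖ = |u α| * α ^ (ε - 2) := fun α hα => by
    rw [Real.norm_eq_abs, abs_mul, abs_of_pos (rpow_pos_of_pos hα _)]
  have hnear : IntegrableOn (fun α => u α * α ^ (ε - 2)) (Ioc 0 1) := by
    have hmaj : IntegrableOn (fun α : ℝ => A * α ^ ε) (Ioc 0 1) :=
      ((intervalIntegral.intervalIntegrable_rpow' hε₀).const_mul A).1
    refine hmaj.mono' ((hcont.mono Ioc_subset_Ioi_self).aestronglyMeasurable measurableSet_Ioc) ?_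
    refine (ae_restrict_iff' measurableSet_Ioc).mpr (ae_of_all _ fun α hα => ?_)
    calc ‖u α * α ^ (ε - 2)‖ = |u α| * α ^ (ε - 2) := hnorm α hα.1
      _ ≤ A * α ^ (2 : ℝ) * α ^ (ε - 2) := by
          rw [rpow_two]
          exact mul_le_mul_of_nonneg_right (hA α hα.1) (rpow_nonneg hα.1.le _)
      _ = A * α ^ ε := by rw [mul_assoc, ← rpow_add hα.1]; ring_nf
  have hfar : IntegrableOn (fun α => u α * α ^ (ε - 2)) (Ioi 1) := by
    have hmaj : IntegrableOn (fun α : ℝ => B * α ^ (ε - 2)) (Ioi 1) :=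
      (integrableOn_Ioi_rpow_of_lt (by linarith) one_pos).const_mul B
    refine hmaj.mono' ((hcont.mono (Ioi_subset_Ioi zero_le_one)).aestronglyMeasurable
      measurableSet_Ioi) ?_
    refine (ae_restrict_iff' measurableSet_Ioi).mpr (ae_of_all _ fun α hα => ?_)
    have hα₀ : 0 < α := zero_lt_one.trans hα
    rw [hnorm α hα₀]
    exact mul_le_mul_of_nonneg_right (hB α hα₀) (rpow_nonneg hα₀.le _)
  simpa only [Ioc_union_Ioi_eq_Ioi zero_le_one] using hnear.union hfar

theorem tendsto_mul_rpow_nhdsGT_zero (hA : ∀ α > 0, |u α| ≤ A * α ^ 2) (hε₀ : -1 < ε) :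
    Tendsto (fun δ => u δ * δ ^ (ε - 1)) (𝓝[>] 0) (𝓝 0) := by
  have hpow : Tendsto (fun δ : ℝ => A * δ ^ (ε + 1)) (𝓝[>] 0) (𝓝 0) := by
    have h : Tendsto (fun δ : ℝ => δ ^ (ε + 1)) (𝓝[>] 0) (𝓝 0) := by
      have h0 := (continuousAt_rpow_const 0 (ε + 1) (Or.inr (by linarith))).tendsto
      rw [zero_rpow (by linarith)] at h0
      exact h0.mono_left nhdsWithin_le_nhds
    simpa using h.const_mul A
  refine squeeze_zero_norm' ?_ hpow
  filter_upwards [self_mem_nhdsWithin] with δ (hδ : 0 < δ)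
  calc ‖u δ * δ ^ (ε - 1)‖ = |u δ| * δ ^ (ε - 1) := by
        rw [Real.norm_eq_abs, abs_mul, abs_of_pos (rpow_pos_of_pos hδ _)]
    _ ≤ A * δ ^ (2 : ℝ) * δ ^ (ε - 1) := by
        rw [rpow_two]
        exact mul_le_mul_of_nonneg_right (hA δ hδ) (rpow_nonneg hδ.le _)
    _ = A * δ ^ (ε + 1) := by rw [mul_assoc, ← rpow_add hδ]; ring_nf

theorem tendsto_mul_rpow_atTop (hB : ∀ α > 0, |u α| ≤ B) (hε₁ : ε < 1) :
    Tendsto (fun α => u α * α ^ (ε - 1)) atTop (𝓝 0) := by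
  have hpow : Tendsto (fun α : ℝ => B * α ^ (-(1 - ε))) atTop (𝓝 0) := by
    simpa using (tendsto_rpow_neg_atTop (by linarith : 0 < 1 - ε)).const_mul B
  refine squeeze_zero_norm' ?_ hpow
  filter_upwards [eventually_gt_atTop 0] with α hα
  rw [Real.norm_eq_abs, abs_mul, abs_of_pos (rpow_pos_of_pos hα _), neg_sub]
  exact mul_le_mul_of_nonneg_right (hB α hα) (rpow_nonneg hα.le _)

theorem intervalIntegral_deriv_mul_rpow {u' : ℝ → ℝ} {a b : ℝ} (ha : 0 < a) (hab : a ≤ b)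
    (hu : ∀ α ∈ Icc a b, HasDerivAt u (u' α) α) (hu' : ContinuousOn u' (Icc a b)) :
    ∫ α in a..b, u' α * α ^ (ε - 1) =
      u b * b ^ (ε - 1) - u a * a ^ (ε - 1) + (1 - ε) * ∫ α in a..b, u α * α ^ (ε - 2) := by
  have hpos : ∀ α ∈ uIcc a b, 0 < α := fun α hα => ha.trans_le (uIcc_of_le hab ▸ hα).1
  have hv : ∀ α ∈ uIcc a b, HasDerivAt (fun t => t ^ (ε - 1)) ((ε - 1) * α ^ (ε - 2)) α :=
    fun α hα => by
      simpa [sub_sub, one_add_one_eq_two] using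
        hasDerivAt_rpow_const (p := ε - 1) (Or.inl (hpos α hα).ne')
  have hv' : ContinuousOn (fun α => (ε - 1) * α ^ (ε - 2)) (uIcc a b) :=
    continuousOn_const.mul (continuousOn_id.rpow_const fun α hα => Or.inl (hpos α hα).ne')
  have hparts := intervalIntegral.integral_mul_deriv_eq_deriv_mul
    (fun α hα => hu α (uIcc_of_le hab ▸ hα)) hv
    (hu'.intervalIntegrable_of_Icc hab) hv'.intervalIntegrable
  simp only [mul_left_comm (u _), intervalIntegral.integral_const_mul] at hparts
  linarith

theorem tendsto_intervalIntegral_deriv_mul_rpow {u' : ℝ → ℝ}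
    (hu : ∀ α > 0, HasDerivAt u (u' α) α) (hu' : ContinuousOn u' (Ioi 0))
    (hA : ∀ α > 0, |u α| ≤ A * α ^ 2) (hB : ∀ α > 0, |u α| ≤ B) (hε₀ : -1 < ε) (hε₁ : ε < 1) :
    Tendsto (fun δ => ∫ α in δ..δ⁻¹, u' α * α ^ (ε - 1)) (𝓝[>] 0)
      (𝓝 ((1 - ε) * ∫ α in Ioi 0, u α * α ^ (ε - 2))) := by
  have hucont : ContinuousOn u (Ioi 0) := fun α hα => (hu α hα).continuousAt.continuousWithinAt
  have hlim := (((tendsto_mul_rpow_atTop hB hε₁).comp tendsto_inv_nhdsGT_zero).sub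
    (tendsto_mul_rpow_nhdsGT_zero hA hε₀)).add
    ((tendsto_intervalIntegral_inv_nhdsGT_zero
      (integrableOn_Ioi_mul_rpow hucont hA hB hε₀ hε₁)).const_mul (1 - ε))
  rw [sub_zero, zero_add] at hlim
  refine hlim.congr' ?_
  filter_upwards [Ioc_mem_nhdsGT one_pos] with δ hδ
  have hδδ : δ ≤ δ⁻¹ := hδ.2.trans (one_le_inv₀ hδ.1 |>.mpr hδ.2)
  have hsub : Icc δ δ⁻¹ ⊆ Ioi 0 := fun α hα => hδ.1.trans_le hα.1
  exact (intervalIntegral_deriv_mul_rpow hδ.1 hδδ (fun α hα => hu α (hsub hα))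
    (hu'.mono hsub)).symm

end PowerWeight

section SecondDifference

variable {f : ℝ → ℝ}

theorem hasDerivAt_two_mul_sub_sub (hf : Differentiable ℝ f) (x α : ℝ) :
    HasDerivAt (fun t => 2 * f x - f (x - t) - f (x + t))
      (deriv f (x - α) - deriv f (x + α)) α := by
  have hminus := (hf (x - α)).hasDerivAt.comp α ((hasDerivAt_id α).const_sub x)
  have hplus := (hf (x + α)).hasDerivAt.comp α ((hasDerivAt_id α).const_add x)
  exact ((hasDerivAt_const α (2 * f x)).sub hminus).sub hplus |>.congr_deriv (by simp)

theorem abs_two_mul_sub_sub_le {M : ℝ} (hf : Differentiable ℝ f) (hf' : Differentiable ℝ (deriv f))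
    (hM : ∀ t, |deriv (deriv f) t| ≤ M) (x : ℝ) {α : ℝ} (hα : 0 ≤ α) :
    |2 * f x - f (x - α) - f (x + α)| ≤ M * α ^ 2 := by
  have hlip : ∀ a b, |deriv f a - deriv f b| ≤ M * |a - b| := fun a b =>
    convex_univ.norm_image_sub_le_of_norm_deriv_le (fun t _ => hf' t) (fun t _ => hM t)
      (mem_univ b) (mem_univ a)
  have hbound : ∀ t ∈ Ico 0 α, ‖deriv f (x - t) - deriv f (x + t)‖ ≤ 2 * M * t := by
    intro t ht
    have h := hlip (x - t) (x + t)
    rw [show x - t - (x + t) = -(2 * t) by ring, abs_neg,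
      abs_of_nonneg (show 0 ≤ 2 * t by linarith [ht.1])] at h
    rw [Real.norm_eq_abs]
    linarith
  have hB : ∀ t, HasDerivAt (fun t => M * t ^ 2) (2 * M * t) t := fun t => by
    simpa [mul_comm, mul_left_comm, mul_assoc] using (hasDerivAt_pow 2 t).const_mul M
  have h := image_norm_le_of_norm_deriv_right_le_deriv_boundary
    (fun t _ => (hasDerivAt_two_mul_sub_sub hf x t).continuousAt.continuousWithinAt)
    (fun t _ => (hasDerivAt_two_mul_sub_sub hf x t).hasDerivWithinAt)
    (by simp [two_mul]) hB hbound (right_mem_Icc.mpr hα)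
  simpa only [Real.norm_eq_abs] using h

theorem abs_two_mul_sub_sub_le_four_mul {C : ℝ} (hC : ∀ t, |f t| ≤ C) (x α : ℝ) :
    |2 * f x - f (x - α) - f (x + α)| ≤ 4 * C := by
  have hfx := abs_le.mp (hC x)
  have hfm := abs_le.mp (hC (x - α))
  have hfp := abs_le.mp (hC (x + α))
  exact abs_le.mpr ⟨by linarith, by linarith⟩

end SecondDifference

theorem regDiff_add_regDiff_neg (ε : ℝ) (f : ℝ → ℝ) {α : ℝ} (hα : 0 < α) (x : ℝ) :
    regDiff ε f α x + regDiff ε f (-α) x = (f (x + α) - f (x - α)) * α ^ (ε - 1) := by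
  rw [regDiff, regDiff, abs_neg, abs_of_pos hα, rpow_sub_one hα.ne', sub_neg_eq_add]
  field_simp
  ring

theorem continuousOn_regDiff (ε : ℝ) {f : ℝ → ℝ} (hf : Continuous f) (x : ℝ) :
    ContinuousOn (fun α => regDiff ε f α x) {0}ᶜ := by
  have hnum : Continuous fun α => f x - f (x - α) := by fun_prop
  exact (hnum.continuousOn.mul (continuous_abs.continuousOn.rpow_const
    fun α hα => Or.inl (abs_ne_zero.mpr hα))).div continuousOn_id fun α hα => hα

theorem sub_div_abs_rpow_add_neg (s : ℝ) (f : ℝ → ℝ) {α : ℝ} (hα : 0 < α) (x : ℝ) :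
    (f x - f (x - α)) / |α| ^ s + (f x - f (x - -α)) / |-α| ^ s =
      (2 * f x - f (x - α) - f (x + α)) * α ^ (-s) := by
  rw [abs_neg, abs_of_pos hα, rpow_neg hα.le, sub_neg_eq_add, ← add_div, div_eq_mul_inv]
  ring

theorem continuousOn_sub_div_abs_rpow (s : ℝ) {f : ℝ → ℝ} (hf : Continuous f) (x : ℝ) :
    ContinuousOn (fun α => (f x - f (x - α)) / |α| ^ s) {0}ᶜ := by
  have hnum : Continuous fun α => f x - f (x - α) := by fun_prop
  exact hnum.continuousOn.div (continuous_abs.continuousOn.rpow_const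
    fun α hα => Or.inl (abs_ne_zero.mpr hα)) fun α hα => (rpow_pos_of_pos (abs_pos.mpr hα) s).ne'

/-- For `f ∈ C²` with `f, f', f''` bounded, the principal value
integral `PV ∫ ∂ₓ Δ_α^ε f (x) dα` exists and equals
`-(1-ε) PV ∫ (f x - f (x-α)) / |α|^{2-ε} dα = -(1-ε) Λ^{1-ε} f (x)`. -/
theorem pv_regDiff_eq_fractional_laplacian
    (ε : ℝ) (hε : ε ∈ Set.Ioo (0:ℝ) 1)
    (f : ℝ → ℝ) (hf : ContDiff ℝ 2 f)
    (hb : ∃ C : ℝ, ∀ x : ℝ, |f x| ≤ C ∧ |deriv f x| ≤ C ∧ |deriv (deriv f) x| ≤ C) :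
    ∀ x : ℝ, ∃ L : ℝ,
      HasPV (fun α => (f x - f (x - α)) / |α| ^ (2 - ε)) L ∧
      HasPV (fun α => regDiff ε (deriv f) α x) (-(1 - ε) * L) := by
  obtain ⟨C, hC⟩ := hb
  have hf₁ : Differentiable ℝ f := hf.differentiable two_ne_zero
  have hf₂ : Differentiable ℝ (deriv f) := hf.differentiable_deriv_two
  have hε₀ : -1 < ε := by linarith [hε.1]
  intro x
  set u := fun α => 2 * f x - f (x - α) - f (x + α)
  have hA : ∀ α > 0, |u α| ≤ C * α ^ 2 := fun α hα =>
    abs_two_mul_sub_sub_le hf₁ hf₂ (fun t => (hC t).2.2) x hα.le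
  have hB : ∀ α > 0, |u α| ≤ 4 * C := fun α _ =>
    abs_two_mul_sub_sub_le_four_mul (fun t => (hC t).1) x α
  have hu : ∀ α > 0, HasDerivAt u (deriv f (x - α) - deriv f (x + α)) α := fun α _ =>
    hasDerivAt_two_mul_sub_sub hf₁ x α
  have hu' : ContinuousOn (fun α => deriv f (x - α) - deriv f (x + α)) (Ioi 0) :=
    ((hf₂.continuous.comp (continuous_sub_left x)).sub
      (hf₂.continuous.comp (continuous_const_add x))).continuousOn
  refine ⟨∫ α in Ioi 0, u α * α ^ (ε - 2), ?_, ?_⟩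
  · refine hasPV_of_tendsto_intervalIntegral (continuousOn_sub_div_abs_rpow _ hf₁.continuous x)
      (fun α hα => by rw [sub_div_abs_rpow_add_neg _ _ hα, neg_sub]) ?_
    exact tendsto_intervalIntegral_inv_nhdsGT_zero
      (integrableOn_Ioi_mul_rpow (fun α hα => (hu α hα).continuousAt.continuousWithinAt)
        hA hB hε₀ hε.2)
  · refine hasPV_of_tendsto_intervalIntegral (continuousOn_regDiff ε hf₂.continuous x)
      (fun α hα => regDiff_add_regDiff_neg ε _ hα x) ?_
    rw [neg_mul]
    refine (tendsto_intervalIntegral_deriv_mul_rpow hu hu' hA hB hε₀ hε.2).neg.congr fun δ => ?_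
    rw [← intervalIntegral.integral_neg]
    congr 1 with α
    ring
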